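/- Let C and D be small categories and let R : Psh(D) ⥤ Psh(C) be a right adjoint functor. Then there exist a small category B and functors F : C ⥤ B and G : D ⥤ B such that R is naturally isomorphic to the composite Π_G ⋙ Δ_F : Psh(D) ⥤ Psh(B) ⥤ Psh(C). In other words, every right adjoint between presheaf categories is naturally isomorphic to a right pushforward followed by a pullback. -/

import Mathlib

/-!
A right adjoint `R` is determined by its left adjoint `L`, which preserves colimits and is
therefore determined by the profunctor `P := yoneda ⋙ L : C ⥤ Psh(D)`. In the collage of `P`
(objects `C ⊕ D`, with `P(c)(d)` as the morphisms from `d` to `c`), restricting the representable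
at `c` along `inr` gives back `P c`; since `Lan_inl` sends representables to representables,
`Lan_inl ⋙ Δ_inr` is a second colimit-preserving functor agreeing with `L` on representables.
So `L ≅ Lan_inl ⋙ Δ_inr`, and passing to right adjoints `R ≅ Π_inr ⋙ Δ_inl`.
-/

open CategoryTheory Limits Opposite

universe v u u₁ u₂

namespace CategoryTheory.Profunctor

variable {C : Type u₁} {D : Type u₂} [Category.{v} C] [Category.{v} D] (P : Profunctor.{v} C D)

def Collage (_ : Profunctor.{v} C D) : Type (max u₁ u₂) := C ⊕ D

namespace Collage

def Hom : Collage P → Collage P → Type v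
  | .inl c, .inl c' => c ⟶ c'
  | .inr d, .inr d' => d ⟶ d'
  | .inr d, .inl c => (P.obj c).obj (op d)
  | .inl _, .inr _ => PEmpty

def id : ∀ X : Collage P, Hom P X X
  | .inl c => 𝟙 c
  | .inr d => 𝟙 d

def comp : ∀ {X Y Z : Collage P}, Hom P X Y → Hom P Y Z → Hom P X Z
  | .inl _, .inl _, .inl _, f, g => f ≫ g
  | .inr _, .inr _, .inr _, f, g => f ≫ g
  | .inr _, .inr _, .inl _, f, m => (P.obj _).map f.op m
  | .inr _, .inl _, .inl _, m, g => (P.map g).app _ m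
  | .inl _, .inr _, _, f, _ => f.elim
  | .inr _, .inl _, .inr _, _, g => g.elim
  | .inl _, .inl _, .inr _, _, g => g.elim

instance : Category.{v} (Collage P) where
  Hom := Hom P
  id := id P
  comp := comp P
  id_comp := by
    rintro (_ | _) (_ | _) f <;> dsimp only [Hom] at f <;>
      first | exact f.elim | (simp [id, comp]; rfl)
  comp_id := by
    rintro (_ | _) (_ | _) f <;> dsimp only [Hom] at f <;>
      first | exact f.elim | (simp [id, comp]; rfl)
  assoc := by
    rintro (_ | _) (_ | _) (_ | _) (_ | _) f g h <;> dsimp only [Hom] at f g h <;>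
      first | exact f.elim | exact g.elim | exact h.elim | (simp [comp]; rfl)

def inl : C ⥤ Collage P where
  obj := Sum.inl
  map f := f

def inr : D ⥤ Collage P where
  obj := Sum.inr
  map f := f

def inlCompYonedaCompRestrictIso :
    inl P ⋙ yoneda ⋙ (Functor.whiskeringLeft Dᵒᵖ (Collage P)ᵒᵖ (Type v)).obj (inr P).op ≅ P :=
  Iso.refl _

end Collage

end CategoryTheory.Profunctor

namespace CategoryTheory.Presheaf

variable {C : Type u} [SmallCategory C]

noncomputable def compYonedaIsoYonedaCompLan {B : Type u₂} [Category.{u} B] (F : C ⥤ B) :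
    F ⋙ yoneda ≅ yoneda ⋙ F.op.lan :=
  Functor.isoWhiskerLeft F uliftYonedaIsoYoneda.{u, u}.symm ≪≫
    compULiftYonedaIsoULiftYonedaCompLan.{u} F ≪≫
    Functor.isoWhiskerRight uliftYonedaIsoYoneda.{u, u} _

noncomputable def isoOfPreservesColimits {ℰ : Type*} [Category ℰ] [HasColimitsOfSize.{u, u} ℰ]
    (L L' : (Cᵒᵖ ⥤ Type u) ⥤ ℰ) [PreservesColimitsOfSize.{u, u} L]
    [PreservesColimitsOfSize.{u, u} L'] (e : yoneda ⋙ L ≅ yoneda ⋙ L') : L ≅ L' :=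
  uniqueExtensionAlongULiftYoneda.{u} L
      (Functor.isoWhiskerRight uliftYonedaIsoYoneda.{u, u}.symm L) ≪≫
    (uniqueExtensionAlongULiftYoneda.{u} L'
      (e ≪≫ Functor.isoWhiskerRight uliftYonedaIsoYoneda.{u, u}.symm L')).symm

end CategoryTheory.Presheaf

namespace CategoryTheory.Profunctor.Collage

variable {C D : Type u} [SmallCategory C] [SmallCategory D] (P : Profunctor.{u} C D)

noncomputable def yonedaCompLanCompRestrictIso :
    yoneda ⋙ (inl P).op.lan ⋙ (Functor.whiskeringLeft Dᵒᵖ (Collage P)ᵒᵖ (Type u)).obj (inr P).op ≅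
      P :=
  (Functor.associator _ _ _).symm ≪≫
    Functor.isoWhiskerRight (Presheaf.compYonedaIsoYonedaCompLan (inl P)).symm _ ≪≫
    inlCompYonedaCompRestrictIso P

noncomputable def isoLanCompRestrict (L : (Cᵒᵖ ⥤ Type u) ⥤ (Dᵒᵖ ⥤ Type u))
    [PreservesColimitsOfSize.{u, u} L] :
    L ≅ (inl (yoneda ⋙ L)).op.lan ⋙
      (Functor.whiskeringLeft Dᵒᵖ (Collage (yoneda ⋙ L))ᵒᵖ (Type u)).obj (inr (yoneda ⋙ L)).op :=
  have := ((inl (yoneda ⋙ L)).op.lanAdjunction (Type u)).comp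
    ((inr (yoneda ⋙ L)).op.ranAdjunction (Type u)) |>.leftAdjoint_preservesColimits
  Presheaf.isoOfPreservesColimits _ _ (yonedaCompLanCompRestrictIso _).symm

end CategoryTheory.Profunctor.Collage

open Profunctor

/-- Every right adjoint functor `R : Psh(D) ⥤ Psh(C)` between presheaf categories on small
categories factors, up to natural isomorphism, as a right pushforward followed by a
pullback: there exist a small category `B` (the collage) and functors `F : C ⥤ B`,
`G : D ⥤ B` (the collage inclusions) with `R ≅ Π_G ⋙ Δ_F`. -/
theorem rightAdjoint_iso_pi_comp_delta {C D : Type u} [SmallCategory C] [SmallCategory D]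
    (R : (Dᵒᵖ ⥤ Type u) ⥤ (Cᵒᵖ ⥤ Type u)) [R.IsRightAdjoint] :
    ∃ (B : Cat.{u, u}) (F : C ⥤ B) (G : D ⥤ B),
      Nonempty (R ≅ G.op.ran ⋙ (Functor.whiskeringLeft Cᵒᵖ Bᵒᵖ (Type u)).obj F.op) := by
  let adj := Adjunction.ofIsRightAdjoint R
  have := adj.leftAdjoint_preservesColimits
  let P : Profunctor.{u} C D := yoneda ⋙ R.leftAdjoint
  refine ⟨Cat.of (Collage P), Collage.inl P, Collage.inr P, ⟨?_⟩⟩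
  exact conjugateIsoEquiv adj (((Collage.inl P).op.lanAdjunction _).comp
    ((Collage.inr P).op.ranAdjunction _)) (Collage.isoLanCompRestrict R.leftAdjoint).symm
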